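/- Let F be a real polynomial of degree less than N with coefficients F_0, …, F_{N−1}, and for r ≥ 0 let β*_r F denote the remainder on dividing ∑_{k=0}^{N−1} β_{r,k}·F_k·X^{k+r} by A(X) = X^N + 2^{−b} X − 1. Then for every integer λ ≥ 0 and every index 0 ≤ i < N: the series ∑_{r=0}^∞ (coefficient of X^i in β*_r F) converges absolutely; the tail satisfies |∑_{r=λ}^∞ (coefficient of X^i in β*_r F)| ≤ (4/3)·2^{−λ(b−2)}·max_{0≤k<N}|F_k|; and |∑_{r=0}^{λ−1} (coefficient of X^i in β*_r F)| ≤ (4/3)·max_{0≤k<N}|F_k|. -/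

import Mathlib

open Polynomial

/-- Generalized binomial coefficient `C(x, r) = x (x-1) ⋯ (x-r+1) / r!`. -/
noncomputable def gbc (x : ℝ) (r : ℕ) : ℝ :=
  (∏ j ∈ Finset.range r, (x - j)) / (r.factorial : ℝ)

/-- `β_{r,k} = C(-k/N, r) (-2^(-b))^r`. -/
noncomputable def betaC (b N r k : ℕ) : ℝ :=
  gbc (-(k : ℝ) / N) r * (-(2:ℝ) ^ (-(b:ℤ))) ^ r

/-- The polynomial `A(X) = X^N + 2^(-b) X - 1` over `ℝ`. -/
noncomputable def Apoly (b N : ℕ) : Polynomial ℝ :=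
  X ^ N + C ((2:ℝ) ^ (-(b:ℤ))) * X - 1

/-- `β*_r F`: the remainder of `∑_{k<N} β_{r,k} F_k X^(k+r)` modulo `A(X)`. -/
noncomputable def bstar (b N r : ℕ) (F : Polynomial ℝ) : Polynomial ℝ :=
  (∑ k ∈ Finset.range N, C (betaC b N r k * F.coeff k) * X ^ (k + r)) %ₘ Apoly b N

/-!
Multiplying by `X` modulo the monic trinomial `X ^ N + a X - 1` shifts the coefficients up and
folds the top one back in, so it enlarges the largest coefficient by a factor at most `1 + |a|`.
Since `|C(x, r)| ≤ 1` for `-1 ≤ x ≤ 0`, the polynomial `∑ β_{r,k} F_k X^k` has coefficients at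
most `2^(-br) max |F_k|`, and `β*_r F` is `X^r` times it modulo `A`. Hence the coefficients of
`β*_r F` are at most `q^r max |F_k|` with `q = 2^(-b) (1 + 2^(-b)) ≤ 1/4`, and both bounds follow
by comparison with a geometric series, using `1 / (1 - q) ≤ 4/3` and `q ≤ 4 · 2^(-b)`.
-/

section ModByMonic

variable {S : Type*} [CommRing S] [Nontrivial S]

theorem X_mul_modByMonic {A : S[X]} (hA : A.Monic) (P : S[X]) :
    (X * P) %ₘ A = X * (P %ₘ A) - C ((P %ₘ A).coeff (A.natDegree - 1)) * A := by
  set R := P %ₘ A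
  set c := R.coeff (A.natDegree - 1)
  have hRdeg : R.degree < A.natDegree :=
    degree_eq_natDegree hA.ne_zero ▸ degree_modByMonic_lt P hA
  have hR : ∀ m, A.natDegree ≤ m → R.coeff m = 0 := fun m hm =>
    coeff_eq_zero_of_degree_lt (hRdeg.trans_le (by exact_mod_cast hm))
  have hdeg : (X * R - C c * A).degree < A.degree := by
    rw [degree_eq_natDegree hA.ne_zero, degree_lt_iff_coeff_zero]
    intro m hm
    replace hm : A.natDegree ≤ m := by exact_mod_cast hm
    rcases m with _ | k
    · simp [hR 0 hm, c, Nat.le_zero.mp hm]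
    · rw [coeff_sub, coeff_X_mul, coeff_C_mul]
      rcases hm.eq_or_lt with h | h
      · rw [← h, hA.coeff_natDegree, mul_one, sub_eq_zero]
        simp [c, h]
      · rw [coeff_eq_zero_of_natDegree_lt h, hR k (by omega), mul_zero, sub_zero]
  have hdvd : A ∣ X * P - (X * R - C c * A) :=
    ⟨X * (P /ₘ A) + C c, by linear_combination X * (modByMonic_add_div P A).symm⟩
  rw [modByMonic_eq_of_dvd_sub hA hdvd, (modByMonic_eq_self_iff hA).2 hdeg]

end ModByMonic

section Trinomial

variable {a : ℝ} {N : ℕ}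

theorem abs_coeff_X_mul_sub_le {B : ℝ} {R : ℝ[X]} (hR : ∀ j, |R.coeff j| ≤ B) (i : ℕ) :
    |(X * R - C (R.coeff (N - 1)) * (X ^ N + C a * X - 1)).coeff i| ≤ (1 + |a|) * B := by
  have hB : 0 ≤ B := (abs_nonneg _).trans (hR 0)
  have hca : ∀ j, |R.coeff j * a| ≤ |a| * B := fun j => by
    rw [abs_mul, mul_comm]; exact mul_le_mul_of_nonneg_left (hR j) (abs_nonneg a)
  rcases i with _ | i
  · simp only [coeff_sub, coeff_X_mul_zero, coeff_C_mul, coeff_add, coeff_X_pow,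
      coeff_X_zero, coeff_one_zero]
    split_ifs
    · simpa using by positivity
    · simpa using by nlinarith [hR (N - 1), abs_nonneg a]
  · simp only [coeff_sub, coeff_X_mul, coeff_C_mul, coeff_add, coeff_X_pow, coeff_X, coeff_one,
      Nat.add_one_ne_zero, if_false, sub_zero]
    split_ifs with hN h1 <;> simp only [mul_one, mul_zero, add_zero, zero_add, sub_zero]
    · subst hN
      rw [Nat.add_sub_cancel, show R.coeff i - R.coeff i * (1 + a) = -(R.coeff i * a) by ring,
        abs_neg]
      nlinarith [hca i]
    · subst hN
      simpa using by positivity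
    · linarith [abs_sub (R.coeff i) (R.coeff (N - 1) * a), hR i, hca (N - 1)]
    · nlinarith [hR i, abs_nonneg a]

theorem monic_X_pow_add_C_mul_X_sub_one (hN : 2 ≤ N) : (X ^ N + C a * X - 1 : ℝ[X]).Monic := by
  monicity!
  simp [show 1 ≤ N by omega, show ¬N ≤ 1 by omega]

theorem natDegree_X_pow_add_C_mul_X_sub_one (hN : 2 ≤ N) :
    (X ^ N + C a * X - 1 : ℝ[X]).natDegree = N := by
  compute_degree!
  all_goals first | omega | simp [show N ≠ 1 by omega, show N ≠ 0 by omega]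

theorem abs_coeff_X_pow_mul_modByMonic_le (hN : 2 ≤ N) {P : ℝ[X]} {B : ℝ}
    (hP : ∀ j, |(P %ₘ (X ^ N + C a * X - 1)).coeff j| ≤ B) (r i : ℕ) :
    |((X ^ r * P) %ₘ (X ^ N + C a * X - 1)).coeff i| ≤ (1 + |a|) ^ r * B := by
  induction r generalizing i with
  | zero => simpa using hP i
  | succ r ih =>
    rw [pow_succ', mul_assoc, X_mul_modByMonic (monic_X_pow_add_C_mul_X_sub_one hN),
      natDegree_X_pow_add_C_mul_X_sub_one hN, pow_succ, mul_comm _ (1 + |a|), mul_assoc]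
    exact abs_coeff_X_mul_sub_le ih i

end Trinomial

theorem coeff_sum_range_C_mul_X_pow {R : Type*} [Semiring R] (f : ℕ → R) (N j : ℕ) :
    (∑ k ∈ Finset.range N, C (f k) * X ^ k).coeff j = if j < N then f j else 0 := by
  simp only [finsetSum_coeff, coeff_C_mul_X_pow, Finset.sum_ite_eq, Finset.mem_range]

theorem abs_gbc_le_one {x : ℝ} (hx1 : -1 ≤ x) (hx0 : x ≤ 0) (r : ℕ) : |gbc x r| ≤ 1 := by
  rw [gbc, abs_div, Nat.abs_cast, div_le_one (by positivity), Finset.abs_prod,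
    ← Finset.prod_range_add_one_eq_factorial, Nat.cast_prod]
  refine Finset.prod_le_prod (fun _ _ => abs_nonneg _) fun j _ => ?_
  rw [abs_of_nonpos (by linarith [j.cast_nonneg (α := ℝ)])]
  push_cast
  linarith

theorem abs_betaC_le {b N k : ℕ} (hk : k ≤ N) (r : ℕ) :
    |betaC b N r k| ≤ ((2 : ℝ) ^ (-(b : ℤ))) ^ r := by
  have hkN : (k : ℝ) / N ≤ 1 := div_le_one_of_le₀ (by exact_mod_cast hk) N.cast_nonneg
  have hgbc : |gbc (-(k : ℝ) / N) r| ≤ 1 :=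
    abs_gbc_le_one (by rw [neg_div]; linarith) (by rw [neg_div, neg_nonpos]; positivity) r
  have hε : 0 < (2 : ℝ) ^ (-(b : ℤ)) := by positivity
  rw [betaC, abs_mul, abs_pow, abs_neg, abs_of_pos hε]
  exact mul_le_of_le_one_left (pow_nonneg hε.le r) hgbc

theorem bstar_eq_X_pow_mul_modByMonic (b N r : ℕ) (F : ℝ[X]) :
    bstar b N r F =
      (X ^ r * ∑ k ∈ Finset.range N, C (betaC b N r k * F.coeff k) * X ^ k) %ₘ Apoly b N := by
  simp only [bstar, Finset.mul_sum, pow_add]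
  congr 1
  exact Finset.sum_congr rfl fun _ _ => by ring

theorem abs_coeff_bstar_le {b N : ℕ} (hN : 2 ≤ N) {F : ℝ[X]} {M : ℝ}
    (hM : ∀ k < N, |F.coeff k| ≤ M) (r j : ℕ) :
    |(bstar b N r F).coeff j| ≤ M * ((2 : ℝ) ^ (-(b : ℤ)) * (1 + (2 : ℝ) ^ (-(b : ℤ)))) ^ r := by
  set ε : ℝ := (2 : ℝ) ^ (-(b : ℤ))
  set G := ∑ k ∈ Finset.range N, C (betaC b N r k * F.coeff k) * X ^ k
  have hε : 0 < ε := by positivity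
  have hM0 : 0 ≤ M := (abs_nonneg _).trans (hM 0 (by omega))
  have hA : Apoly b N = X ^ N + C ε * X - 1 := rfl
  have hmonic : (X ^ N + C ε * X - 1).Monic := monic_X_pow_add_C_mul_X_sub_one hN
  have hG : G %ₘ (X ^ N + C ε * X - 1) = G := by
    rw [modByMonic_eq_self_iff hmonic, degree_eq_natDegree hmonic.ne_zero,
      natDegree_X_pow_add_C_mul_X_sub_one hN, degree_lt_iff_coeff_zero]
    intro m hm
    rw [coeff_sum_range_C_mul_X_pow, if_neg (by exact_mod_cast not_lt.2 hm)]
  have hGcoeff : ∀ m, |(G %ₘ (X ^ N + C ε * X - 1)).coeff m| ≤ ε ^ r * M := by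
    intro m
    rw [hG, coeff_sum_range_C_mul_X_pow]
    split_ifs with hm
    · rw [abs_mul]
      exact mul_le_mul (abs_betaC_le hm.le r) (hM m hm) (abs_nonneg _) (by positivity)
    · simpa using by positivity
  rw [bstar_eq_X_pow_mul_modByMonic, hA, mul_pow, mul_comm (ε ^ r), mul_comm M, mul_assoc]
  simpa only [abs_of_pos hε] using abs_coeff_X_pow_mul_modByMonic_le hN hGcoeff r j

section Geometric

variable {f : ℕ → ℝ} {c q : ℝ}

theorem summable_abs_of_abs_le_geometric (hq0 : 0 ≤ q) (hq1 : q < 1)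
    (hf : ∀ r, |f r| ≤ c * q ^ r) : Summable fun r => |f r| :=
  ((summable_geometric_of_lt_one hq0 hq1).mul_left c).of_nonneg_of_le (fun _ => abs_nonneg _) hf

theorem abs_tsum_le_of_abs_le_geometric (hq0 : 0 ≤ q) (hq1 : q < 1)
    (hf : ∀ r, |f r| ≤ c * q ^ r) : |∑' r, f r| ≤ c / (1 - q) := by
  rw [div_eq_mul_inv]
  exact tsum_of_norm_bounded (f := f) ((hasSum_geometric_of_lt_one hq0 hq1).mul_left c) hf

theorem abs_tsum_add_le_of_abs_le_geometric (hq0 : 0 ≤ q) (hq1 : q < 1)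
    (hf : ∀ r, |f r| ≤ c * q ^ r) (n : ℕ) : |∑' r, f (n + r)| ≤ c * q ^ n / (1 - q) :=
  abs_tsum_le_of_abs_le_geometric hq0 hq1 fun r => (hf (n + r)).trans_eq (by ring)

theorem abs_sum_range_le_of_abs_le_geometric (hq0 : 0 ≤ q) (hq1 : q < 1)
    (hf : ∀ r, |f r| ≤ c * q ^ r) (n : ℕ) : |∑ r ∈ Finset.range n, f r| ≤ c / (1 - q) :=
  (Finset.abs_sum_le_sum_abs _ _).trans <| (Finset.sum_le_sum fun r _ => hf r).trans <|
    sum_le_hasSum _ (fun r _ => ((abs_nonneg _).trans (hf r)))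
      ((hasSum_geometric_of_lt_one hq0 hq1).mul_left c)

end Geometric

theorem div_one_sub_le_four_thirds_mul {x q : ℝ} (hx : 0 ≤ x) (hq : q ≤ 1 / 4) :
    x / (1 - q) ≤ 4 / 3 * x := by
  rw [div_le_iff₀ (by linarith)]
  nlinarith

theorem two_zpow_neg_mul_sub_two (b lam : ℕ) :
    (2 : ℝ) ^ (-((lam : ℤ) * ((b : ℤ) - 2))) = (4 * (2 : ℝ) ^ (-(b : ℤ))) ^ lam := by
  rw [show -((lam : ℤ) * ((b : ℤ) - 2)) = (2 + -(b : ℤ)) * lam by ring, zpow_mul, zpow_natCast,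
    zpow_add₀ two_ne_zero]
  norm_num

/-- the coefficientwise series `∑_r (β*_r F)_i` converges absolutely,
the tail from `r = λ` onwards is bounded by `(4/3) 2^(-λ(b-2)) max_k |F_k|`, and the
partial sum over `r < λ` is bounded by `(4/3) max_k |F_k|`. -/
theorem bstar_series_bounds (b N : ℕ) (hb : 4 ≤ b) (hN : 3 ≤ N)
    (F : Polynomial ℝ) (lam : ℕ) (i : ℕ) :
    Summable (fun r : ℕ => |(bstar b N r F).coeff i|) ∧
    |∑' r : ℕ, (bstar b N (lam + r) F).coeff i| ≤
      4 / 3 * (2:ℝ) ^ (-((lam : ℤ) * ((b : ℤ) - 2))) *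
        (Finset.range N).sup' (Finset.nonempty_range_iff.mpr (by omega))
          (fun k => |F.coeff k|) ∧
    |∑ r ∈ Finset.range lam, (bstar b N r F).coeff i| ≤
      4 / 3 *
        (Finset.range N).sup' (Finset.nonempty_range_iff.mpr (by omega))
          (fun k => |F.coeff k|) := by
  set M :=
    (Finset.range N).sup' (Finset.nonempty_range_iff.mpr (by omega)) fun k => |F.coeff k|
  set ε : ℝ := (2 : ℝ) ^ (-(b : ℤ))
  have hM : ∀ k < N, |F.coeff k| ≤ M := fun k hk =>
    Finset.le_sup' (fun k => |F.coeff k|) (Finset.mem_range.2 hk)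
  have hM0 : 0 ≤ M := (abs_nonneg _).trans (hM 0 (by omega))
  have hε0 : 0 < ε := by positivity
  have hε : ε ≤ 1 / 16 := by
    calc ε ≤ (2 : ℝ) ^ (-4 : ℤ) := zpow_le_zpow_right₀ one_le_two (by omega)
      _ = 1 / 16 := by norm_num
  have hq0 : 0 ≤ ε * (1 + ε) := by positivity
  have hq : ε * (1 + ε) ≤ 1 / 4 := by nlinarith
  have hbound := abs_coeff_bstar_le (b := b) (by omega) hM (j := i)
  refine ⟨summable_abs_of_abs_le_geometric hq0 (by linarith) hbound, ?_, ?_⟩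
  · calc _ ≤ M * (ε * (1 + ε)) ^ lam / (1 - ε * (1 + ε)) :=
          abs_tsum_add_le_of_abs_le_geometric hq0 (by linarith) hbound lam
      _ ≤ 4 / 3 * (M * (4 * ε) ^ lam) := by
          refine (div_one_sub_le_four_thirds_mul (by positivity) hq).trans ?_
          gcongr _ * (M * ?_ ^ _)
          nlinarith
      _ = _ := by rw [two_zpow_neg_mul_sub_two]; ring
  · calc _ ≤ M / (1 - ε * (1 + ε)) :=
          abs_sum_range_le_of_abs_le_geometric hq0 (by linarith) hbound lam
      _ ≤ 4 / 3 * M := div_one_sub_le_four_thirds_mul hM0 hq
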